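/- arXiv:1911.09379 — 5 statements merged into one kernel-verified Lean document; each statement's English description precedes it below -/
import Mathlib

section
/- For every graph G with feedback edge number fes(G) = k, the tree-cut width of G is at most 2k + 1. -/
open scoped Classical

noncomputable section

/-- A multigraph on an ambient type `A`: a set of vertices together with an
edge-multiplicity function on unordered pairs (loops allowed). -/
structure Multigraph (A : Type) where
  verts : Set A
  mult : Sym2 A → ℕ

namespace Multigraph

variable {A : Type} [Fintype A]

/-- The degree of a vertex in a multigraph; a loop contributes `2` to the degree. -/
def deg (M : Multigraph A) (x : A) : ℕ :=
  (∑ y : A, M.mult s(x, y)) + M.mult s(x, x)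

/-- Suppressing the vertex `v`: delete `v` (and all edges incident to it) and, if `v`
had exactly two edge-endpoints at distinct neighbours `a`, `b`, add an edge `{a,b}`;
if `v` had a double edge to a vertex `a`, add a loop at `a`.  (The formula below is
the intended operation when `deg v ≤ 2`.) -/
def suppress (M : Multigraph A) (v : A) : Multigraph A where
  verts := M.verts \ {v}
  mult := Sym2.lift ⟨fun x y =>
    if x = v ∨ y = v then 0
    else M.mult s(x, y) +
      (if x = y then (if M.mult s(v, x) = 2 then 1 else 0)
       else min (M.mult s(v, x)) 1 * min (M.mult s(v, y)) 1),
    by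
      intro x y
      rcases eq_or_ne x y with rfl | hxy
      · rfl
      · dsimp only
        by_cases h : x = v ∨ y = v
        · rw [if_pos h, if_pos (Or.symm h)]
        · rw [if_neg h, if_neg (fun hc => h (Or.symm hc)), if_neg hxy, if_neg (Ne.symm hxy)]
          have h1 : s(x, y) = s(y, x) := Sym2.eq_swap
          rw [h1, Nat.mul_comm]⟩

/-- One step of suppression: suppress some vertex of degree at most `2`. -/
def SuppressStep (M M' : Multigraph A) : Prop :=
  ∃ v ∈ M.verts, M.deg v ≤ 2 ∧ M' = M.suppress v

/-- A multigraph in which no vertex of degree at most `2` is left. -/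
def Reduced (M : Multigraph A) : Prop := ∀ v ∈ M.verts, 3 ≤ M.deg v

/-- The number of vertices remaining after exhaustively suppressing vertices of degree
at most `2`. -/
def reducedSize (M : Multigraph A) : ℕ :=
  sInf {n | ∃ M' : Multigraph A,
    Relation.ReflTransGen SuppressStep M M' ∧ M'.Reduced ∧ n = M'.verts.ncard}

end Multigraph

/-- A (rooted) tree-cut decomposition of a graph on vertex type `V`: a tree `T` on a
node type `N`, a root, and a near-partition of `V` into bags indexed by the nodes. -/
structure TreeCutDecomp (N V : Type) where
  T : SimpleGraph N
  connected : T.Connected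
  acyclic : T.IsAcyclic
  root : N
  bag : N → Set V
  bag_disjoint : ∀ s t : N, s ≠ t → Disjoint (bag s) (bag t)
  bag_cover : ∀ v : V, ∃ t : N, v ∈ bag t

namespace TreeCutDecomp

variable {N V : Type} [Fintype N] [Fintype V] (D : TreeCutDecomp N V)

/-- The nodes in the subtree rooted at `t`: those nodes whose every walk to the root
passes through `t`. -/
def subtree (t : N) : Set N := {u | ∀ p : D.T.Walk u D.root, t ∈ p.support}

/-- The set of graph vertices contained in bags of the subtree rooted at `t`. -/
def Yset (t : N) : Set V := {v | ∃ u ∈ D.subtree t, v ∈ D.bag u}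

/-- The adhesion of a node `t`: the number of edges of `G` crossing between the vertices
below `t` and the remaining vertices (this is `cut(e(t))` for `t ≠ root`, and `0` for
the root). -/
def adh (G : SimpleGraph V) (t : N) : ℕ :=
  Set.ncard {e : Sym2 V | e ∈ G.edgeSet ∧
    ∃ x y : V, e = s(x, y) ∧ x ∈ D.Yset t ∧ y ∉ D.Yset t}

/-- The nodes in the component of `T - t` containing the neighbour `s` of `t`:
those nodes whose every walk to `t` passes through `s`. -/
def branch (t s : N) : Set N := {u | ∀ p : D.T.Walk u t, s ∈ p.support}

/-- Some node whose bag contains `v`. -/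
def nodeOf (v : V) : N := @Classical.epsilon N ⟨D.root⟩ (fun u => v ∈ D.bag u)

/-- The projection used to build the torso at `t`: vertices in the bag of `t` are kept,
and any other vertex is mapped to (the contracted vertex corresponding to) the
component of `T - t` containing its bag's node, represented by the neighbour `s` of `t`
in that component. -/
def proj (t : N) (v : V) : V ⊕ N :=
  if v ∈ D.bag t then Sum.inl v
  else Sum.inr (@Classical.epsilon N ⟨D.root⟩
    (fun s => D.T.Adj t s ∧ D.nodeOf v ∈ D.branch t s))

/-- The torso of the decomposition at node `t`: the multigraph obtained from `G` by
contracting, for each component of `T - t`, the union of bags of that component into a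
single vertex (no loops are created; parallel edges are counted with multiplicity). -/
def torso (G : SimpleGraph V) (t : N) : Multigraph (V ⊕ N) where
  verts := (Sum.inl '' D.bag t) ∪ (Sum.inr '' (D.T.neighborSet t))
  mult := fun e => Set.ncard {f : Sym2 V | f ∈ G.edgeSet ∧
    Sym2.map (D.proj t) f = e ∧ ¬ (Sym2.map (D.proj t) f).IsDiag}

/-- The torso-size of a node `t`: the number of vertices left after exhaustively
suppressing vertices of degree at most `2` in the torso at `t`. -/
def tor (G : SimpleGraph V) (t : N) : ℕ := (D.torso G t).reducedSize

/-- The width of the tree-cut decomposition. -/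
def width (G : SimpleGraph V) : ℕ :=
  Finset.univ.sup fun t : N => max (D.adh G t) (D.tor G t)

end TreeCutDecomp

/-- The tree-cut width of a graph: the minimum width of a (rooted) tree-cut
decomposition. -/
def tcw {V : Type} [Fintype V] (G : SimpleGraph V) : ℕ :=
  sInf {w | ∃ (N : Type) (_ : Fintype N) (D : TreeCutDecomp N V), D.width G = w}

/-- The feedback edge number of a graph: the minimum number of edges whose deletion
leaves a forest. -/
def fes {V : Type} [Fintype V] (G : SimpleGraph V) : ℕ :=
  sInf {k | ∃ F : Set (Sym2 V), F ⊆ G.edgeSet ∧ F.ncard = k ∧ (G.deleteEdges F).IsAcyclic}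

/-!
The single-node decomposition has adhesion `0`, and its torso is `G` itself. Suppressing a
vertex of degree at most `2` never increases the cycle rank `|E| - |V| + c`, while a multigraph
of minimum degree at least `3` has `3|V| ≤ 2|E|`, hence `|V| ≤ 2(|E| - |V| + c)`. So the torso
size is at most twice the cycle rank of `G`, which is at most `fes G` because a forest has at
most `|V| - c` edges.
-/

namespace SimpleGraph

lemma Reachable.of_bypass {A : Type} {H H' : SimpleGraph A} {v : A}
    (hoff : ∀ x y, H.Adj x y → x ≠ v → y ≠ v → H'.Adj x y)
    (hthrough : ∀ x y, H.Adj v x → H.Adj v y → x ≠ y → H'.Adj x y)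
    {u w : A} (hu : u ≠ v) (hw : w ≠ v) (h : H.Reachable u w) : H'.Reachable u w := by
  obtain ⟨p⟩ := h
  -- strengthened so that the induction can pass through `v`
  suffices ∀ u (p : H.Walk u w),
      (u ≠ v → H'.Reachable u w) ∧ (u = v → ∀ a, H.Adj v a → H'.Reachable a w) from
    (this u p).1 hu
  clear hu p
  intro u p
  induction p with
  | nil => exact ⟨fun _ => .rfl, fun h => absurd h hw⟩
  | @cons u z w hadj q ih =>
    refine ⟨fun hu => ?_, ?_⟩
    · by_cases hz : z = v
      · exact (ih hw).2 hz u (hz ▸ hadj.symm)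
      · exact (hoff u z hadj hu hz).reachable.trans ((ih hw).1 hz)
    · rintro huv a ha
      subst huv
      have hz : z ≠ u := hadj.ne'
      by_cases haz : a = z
      · exact haz ▸ (ih hw).1 hz
      · exact (hthrough a z ha hadj haz).reachable.trans ((ih hw).1 hz)

variable {V : Type} [Fintype V]

lemma card_connectedComponent_lt_deleteEdges {G : SimpleGraph V} {a b : V} (hadj : G.Adj a b)
    (hbridge : G.IsBridge s(a, b)) :
    Nat.card G.ConnectedComponent < Nat.card (G.deleteEdges {s(a, b)}).ConnectedComponent := by
  have hle : G.deleteEdges {s(a, b)} ≤ G := deleteEdges_le _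
  simp only [Nat.card_eq_fintype_card]
  refine Fintype.card_lt_of_surjective_not_injective _
    (ConnectedComponent.surjective_map_ofLE hle) fun hinj => hbridge ?_
  exact ConnectedComponent.exact (hinj (ConnectedComponent.sound hadj.reachable))

lemma IsAcyclic.ncard_edgeSet_add_card_connectedComponent_le {G : SimpleGraph V}
    (hG : G.IsAcyclic) : G.edgeSet.ncard + Nat.card G.ConnectedComponent ≤ Nat.card V := by
  induction hn : G.edgeSet.ncard using Nat.strong_induction_on generalizing G with
  | _ n ih =>
  obtain hempty | ⟨e, he⟩ := G.edgeSet.eq_empty_or_nonempty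
  · rw [← hn, hempty, Set.ncard_empty, zero_add]
    exact Nat.card_le_card_of_surjective _ Quot.mk_surjective
  induction e using Sym2.ind with
  | _ a b =>
  have hadj : G.Adj a b := he
  have hcard : (G.deleteEdges {s(a, b)}).edgeSet.ncard + 1 = n := by
    rw [edgeSet_deleteEdges, ← hn, Set.ncard_sdiff_singleton_add_one he]
  have hlt := card_connectedComponent_lt_deleteEdges hadj
    (isAcyclic_iff_forall_adj_isBridge.mp hG hadj)
  have hforest := ih _ (by omega) (hG.anti (deleteEdges_le {s(a, b)})) rfl
  omega

lemma exists_ncard_eq_fes_isAcyclic_deleteEdges (G : SimpleGraph V) :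
    ∃ F ⊆ G.edgeSet, F.ncard = fes G ∧ (G.deleteEdges F).IsAcyclic := by
  have hne : {k | ∃ F ⊆ G.edgeSet, F.ncard = k ∧ (G.deleteEdges F).IsAcyclic}.Nonempty :=
    ⟨_, G.edgeSet, subset_rfl, rfl, by simp⟩
  exact Nat.sInf_mem hne

lemma ncard_edgeSet_add_card_connectedComponent_le_add_fes (G : SimpleGraph V) :
    G.edgeSet.ncard + Nat.card G.ConnectedComponent ≤ Nat.card V + fes G := by
  obtain ⟨F, hFG, hFcard, hF⟩ := G.exists_ncard_eq_fes_isAcyclic_deleteEdges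
  have hforest := hF.ncard_edgeSet_add_card_connectedComponent_le
  have hedges : (G.deleteEdges F).edgeSet.ncard + F.ncard = G.edgeSet.ncard := by
    rw [edgeSet_deleteEdges, Set.ncard_sdiff_add_ncard_of_subset hFG]
  have hcomp := ConnectedComponent.card_le_card_of_le (deleteEdges_le (G := G) F)
  omega

end SimpleGraph

namespace Multigraph

variable {A : Type}

lemma suppress_mult (M : Multigraph A) (v x y : A) :
    (M.suppress v).mult s(x, y) =
      if x = v ∨ y = v then 0
      else M.mult s(x, y) +
        (if x = y then (if M.mult s(v, x) = 2 then 1 else 0)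
         else min (M.mult s(v, x)) 1 * min (M.mult s(v, y)) 1) := rfl

lemma mult_comm (M : Multigraph A) (x y : A) : M.mult s(x, y) = M.mult s(y, x) := by
  rw [Sym2.eq_swap]

def underlying (M : Multigraph A) : SimpleGraph A where
  Adj x y := x ≠ y ∧ M.mult s(x, y) ≠ 0
  symm := ⟨fun _ _ h => ⟨h.1.symm, by rw [mult_comm]; exact h.2⟩⟩
  loopless := ⟨fun _ h => h.1 rfl⟩

lemma underlying_suppress_adj (M : Multigraph A) (v x y : A) :
    (M.suppress v).underlying.Adj x y ↔ x ≠ y ∧ x ≠ v ∧ y ≠ v ∧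
      (M.mult s(x, y) ≠ 0 ∨ (M.mult s(v, x) ≠ 0 ∧ M.mult s(v, y) ≠ 0)) := by
  simp only [underlying, suppress_mult]
  by_cases hxy : x = y
  · simp [hxy]
  by_cases hv : x = v ∨ y = v
  · rcases hv with rfl | rfl <;> simp
  · push Not at hv
    simp only [ne_eq, hxy, not_false_eq_true, hv, or_self, ↓reduceIte, Nat.add_eq_zero_iff,
      mul_eq_zero, min_eq_zero, one_ne_zero, or_false, not_and, not_or, true_and]
    tauto

def numComponents (M : Multigraph A) : ℕ :=
  (M.underlying.connectedComponentMk '' M.verts).ncard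

variable [Fintype A]

def degSum (M : Multigraph A) : ℕ := ∑ x, M.deg x

def numNeighbors (M : Multigraph A) (v : A) : ℕ :=
  ∑ x ∈ Finset.univ.erase v, min (M.mult s(v, x)) 1

/-- Twice the cycle rank `|E| - |V| + c`, with `c` counting components that meet `M.verts`. -/
def twiceCycleRank (M : Multigraph A) : ℤ :=
  M.degSum + 2 * M.numComponents - 2 * M.verts.ncard

lemma deg_eq_sum_erase (M : Multigraph A) (v : A) :
    M.deg v = ∑ x ∈ Finset.univ.erase v, M.mult s(v, x) + 2 * M.mult s(v, v) := by
  rw [deg, ← Finset.add_sum_erase _ _ (Finset.mem_univ v)]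
  ring

lemma mult_eq_zero_of_deg_eq_zero (M : Multigraph A) {v : A} (h : M.deg v = 0) (y : A) :
    M.mult s(v, y) = 0 := by
  have hsum : ∑ y, M.mult s(v, y) = 0 := by rw [deg] at h; omega
  exact Finset.sum_eq_zero_iff.mp hsum y (Finset.mem_univ y)

lemma deg_suppress_self (M : Multigraph A) (v : A) : (M.suppress v).deg v = 0 := by
  simp [deg, suppress_mult]

lemma deg_suppress_of_ne (M : Multigraph A) {v x : A} (hx : x ≠ v) :
    (M.suppress v).deg x + M.mult s(v, x) + min (M.mult s(v, x)) 1 =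
      M.deg x + 2 * (if M.mult s(v, x) = 2 then 1 else 0)
        + min (M.mult s(v, x)) 1 * M.numNeighbors v := by
  set U := Finset.univ.erase v
  set t : A → ℕ := fun y => min (M.mult s(v, y)) 1
  set d := if M.mult s(v, x) = 2 then 1 else 0
  have hxU : x ∈ U := Finset.mem_erase.mpr ⟨hx, Finset.mem_univ x⟩
  have htt : t x * t x = t x := by
    rcases Nat.le_one_iff_eq_zero_or_eq_one.mp (min_le_right (M.mult s(v, x)) 1) with h | h <;>
      simp [t, h]
  have hmult : ∀ y ∈ U, (M.suppress v).mult s(x, y) =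
      M.mult s(x, y) + if x = y then d else t x * t y := fun y hy => by
    rw [suppress_mult, if_neg (by simp [hx, Finset.ne_of_mem_erase hy])]
  have hcross : ∑ y ∈ U, (if x = y then d else t x * t y) + t x * t x
      = d + t x * M.numNeighbors v := by
    rw [numNeighbors, Finset.mul_sum, ← Finset.add_sum_erase _ _ hxU,
      ← Finset.add_sum_erase _ (fun y => t x * t y) hxU, if_pos rfl,
      Finset.sum_congr rfl fun y hy => if_neg (Finset.ne_of_mem_erase hy).symm]
    ring
  have hdeg' : (M.suppress v).deg x
      = ∑ y ∈ U, (M.mult s(x, y) + if x = y then d else t x * t y) + (M.mult s(x, x) + d) := by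
    rw [deg, ← Finset.add_sum_erase _ _ (Finset.mem_univ v), Finset.sum_congr rfl hmult,
      hmult x hxU, if_pos rfl, suppress_mult, if_pos (Or.inr rfl), zero_add]
  have hdeg : M.deg x = M.mult s(v, x) + ∑ y ∈ U, M.mult s(x, y) + M.mult s(x, x) := by
    rw [deg, ← Finset.add_sum_erase _ _ (Finset.mem_univ v), mult_comm]
  rw [hdeg', hdeg, Finset.sum_add_distrib]
  simp only [t] at htt hcross ⊢
  omega

-- Deleting `v` removes `deg v` edge-ends at `v` and `∑ mult s(v, x)` at its other neighbours;
-- its `T = numNeighbors v` distinct neighbours then become pairwise adjacent (`T * T - T`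
-- edge-ends), and a neighbour joined to `v` by a double edge gets a loop.
lemma degSum_suppress (M : Multigraph A) (v : A) :
    (M.suppress v).degSum + M.deg v + ∑ x ∈ Finset.univ.erase v, M.mult s(v, x)
        + M.numNeighbors v =
      M.degSum + 2 * ∑ x ∈ Finset.univ.erase v, (if M.mult s(v, x) = 2 then 1 else 0)
        + M.numNeighbors v * M.numNeighbors v := by
  have hsum := Finset.sum_congr (rfl : Finset.univ.erase v = _) fun x hx =>
    M.deg_suppress_of_ne (v := v) (x := x) (Finset.ne_of_mem_erase hx)
  simp only [Finset.sum_add_distrib, ← Finset.mul_sum, ← Finset.sum_mul] at hsum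
  rw [degSum, degSum, ← Finset.add_sum_erase _ _ (Finset.mem_univ v),
    ← Finset.add_sum_erase _ (M.deg) (Finset.mem_univ v), deg_suppress_self]
  rw [numNeighbors] at hsum ⊢
  omega

lemma degSum_suppress_add_le (M : Multigraph A) {v : A} (h : M.deg v ≤ 2) :
    (M.suppress v).degSum + 2 * min (M.deg v) 1 ≤ M.degSum := by
  have hsuppress := M.degSum_suppress v
  have hdeg := M.deg_eq_sum_erase v
  set U := Finset.univ.erase v
  set S := ∑ x ∈ U, M.mult s(v, x)
  set T := M.numNeighbors v with hT
  set E₂ := ∑ x ∈ U, if M.mult s(v, x) = 2 then 1 else 0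
  have hE₂T : E₂ + T ≤ S := by
    rw [hT, numNeighbors, ← Finset.sum_add_distrib]
    exact Finset.sum_le_sum fun x _ => by split_ifs <;> omega
  have hTpos : S ≠ 0 → T ≠ 0 := by
    intro hS hT0
    refine hS (Finset.sum_eq_zero fun x hx => ?_)
    have hx := (Finset.sum_eq_zero_iff.mp hT0) x hx
    omega
  have hT2 : T ≤ 2 := by omega
  interval_cases T <;> omega

lemma numComponents_suppress_le (M : Multigraph A) (v : A) :
    (M.suppress v).numComponents ≤ M.numComponents := by
  set H := M.underlying
  set H' := (M.suppress v).underlying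
  have hreach : ∀ x y, H'.Reachable x y → H.Reachable x y := by
    intro x y hxy
    rw [SimpleGraph.reachable_iff_reflTransGen] at hxy ⊢
    refine Relation.reflTransGen_closed (fun a b hab => ?_) x y hxy
    obtain ⟨hab, hav, hbv, hmult | ⟨ha, hb⟩⟩ := (M.underlying_suppress_adj v a b).mp hab
    · exact .single ⟨hab, hmult⟩
    · exact .tail (.single ⟨hav, by rwa [mult_comm]⟩) ⟨hbv.symm, hb⟩
  let F : H'.ConnectedComponent → H.ConnectedComponent :=
    SimpleGraph.ConnectedComponent.lift H.connectedComponentMk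
      fun x y p _ => SimpleGraph.ConnectedComponent.sound (hreach x y p.reachable)
  refine Set.ncard_le_ncard_of_injOn F ?_ ?_
  · rintro _ ⟨x, hx, rfl⟩
    exact ⟨x, hx.1, rfl⟩
  · rintro _ ⟨x, hx, rfl⟩ _ ⟨y, hy, rfl⟩ hF
    refine SimpleGraph.ConnectedComponent.sound (.of_bypass (v := v) ?_ ?_ hx.2 hy.2
      (SimpleGraph.ConnectedComponent.exact hF))
    · exact fun a b hab hav hbv => (M.underlying_suppress_adj v a b).mpr
        ⟨hab.1, hav, hbv, .inl hab.2⟩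
    · exact fun a b ha hb hab => (M.underlying_suppress_adj v a b).mpr
        ⟨hab, ha.1.symm, hb.1.symm, .inr ⟨ha.2, hb.2⟩⟩

lemma numComponents_suppress_add_one (M : Multigraph A) {v : A} (hv : v ∈ M.verts)
    (h : M.deg v = 0) : (M.suppress v).numComponents + 1 = M.numComponents := by
  have hzero := M.mult_eq_zero_of_deg_eq_zero h
  have hzero' : ∀ x, M.mult s(x, v) = 0 := fun x => by rw [mult_comm]; exact hzero x
  have hunderlying : (M.suppress v).underlying = M.underlying := by
    ext x y
    rw [underlying_suppress_adj]
    by_cases hx : x = v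
    · simp [underlying, hx, hzero]
    by_cases hy : y = v
    · simp [underlying, hy, hzero']
    simp [underlying, hx, hy, hzero]
  have hisolated : ∀ x, M.underlying.connectedComponentMk x =
      M.underlying.connectedComponentMk v → x = v := by
    intro x hx
    obtain ⟨p⟩ := (SimpleGraph.ConnectedComponent.exact hx).symm
    cases p with
    | nil => rfl
    | cons hadj _ => exact absurd (hzero _) hadj.2
  have hverts : M.verts = insert v (M.verts \ {v}) := by
    rw [Set.insert_sdiff_singleton, Set.insert_eq_of_mem hv]
  change (_ '' (M.verts \ {v})).ncard + 1 = _
  rw [hunderlying, numComponents]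
  conv_rhs => rw [hverts]
  rw [Set.image_insert_eq, Set.ncard_insert_of_notMem]
  rintro ⟨x, hx, hxv⟩
  exact hx.2 (hisolated x hxv)

lemma twiceCycleRank_suppress_le (M : Multigraph A) {v : A} (hv : v ∈ M.verts)
    (hdeg : M.deg v ≤ 2) : (M.suppress v).twiceCycleRank ≤ M.twiceCycleRank := by
  have hdegSum := M.degSum_suppress_add_le hdeg
  have hverts : (M.suppress v).verts.ncard + 1 = M.verts.ncard :=
    Set.ncard_sdiff_singleton_add_one hv
  have hcomp : (M.suppress v).numComponents + 1 ≤ M.numComponents + min (M.deg v) 1 := by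
    rcases Nat.eq_zero_or_pos (M.deg v) with h0 | hpos
    · have hisolated := M.numComponents_suppress_add_one hv h0
      omega
    · have hle := M.numComponents_suppress_le v
      omega
  simp only [twiceCycleRank]
  omega

lemma SuppressStep.twiceCycleRank_le {M M' : Multigraph A} (h : SuppressStep M M') :
    M'.twiceCycleRank ≤ M.twiceCycleRank := by
  obtain ⟨v, hv, hdeg, rfl⟩ := h
  exact M.twiceCycleRank_suppress_le hv hdeg

lemma twiceCycleRank_le_of_reflTransGen {M M' : Multigraph A}
    (h : Relation.ReflTransGen SuppressStep M M') : M'.twiceCycleRank ≤ M.twiceCycleRank := by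
  induction h with
  | refl => exact le_rfl
  | tail _ hstep ih => exact hstep.twiceCycleRank_le.trans ih

lemma Reduced.ncard_verts_le_twiceCycleRank {M : Multigraph A} (h : M.Reduced) :
    (M.verts.ncard : ℤ) ≤ M.twiceCycleRank := by
  have hsum : 3 * M.verts.toFinset.card ≤ M.degSum := calc
    3 * M.verts.toFinset.card ≤ ∑ x ∈ M.verts.toFinset, M.deg x := by
      rw [mul_comm, ← smul_eq_mul]
      exact Finset.card_nsmul_le_sum _ _ _ fun x hx => h x (Set.mem_toFinset.mp hx)
    _ ≤ M.degSum := Finset.sum_le_sum_of_subset (Finset.subset_univ _)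
  rw [Set.ncard_eq_toFinset_card', twiceCycleRank, Set.ncard_eq_toFinset_card']
  omega

lemma exists_reflTransGen_reduced (M : Multigraph A) :
    ∃ M', Relation.ReflTransGen SuppressStep M M' ∧ M'.Reduced := by
  induction hn : M.verts.ncard using Nat.strong_induction_on generalizing M with
  | _ n ih =>
  by_cases hred : M.Reduced
  · exact ⟨M, .refl, hred⟩
  obtain ⟨v, hv, hdeg⟩ : ∃ v ∈ M.verts, M.deg v < 3 := by
    simpa [Reduced] using hred
  have hverts : (M.suppress v).verts.ncard + 1 = M.verts.ncard :=
    Set.ncard_sdiff_singleton_add_one hv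
  obtain ⟨M', hM', hred'⟩ := ih _ (by omega) (M.suppress v) rfl
  exact ⟨M', .head ⟨v, hv, by omega, rfl⟩ hM', hred'⟩

lemma reducedSize_le_twiceCycleRank (M : Multigraph A) :
    (M.reducedSize : ℤ) ≤ M.twiceCycleRank := by
  obtain ⟨M', hM', hred⟩ := M.exists_reflTransGen_reduced
  have hsize : M.reducedSize ≤ M'.verts.ncard := Nat.sInf_le ⟨M', hM', hred, rfl⟩
  calc (M.reducedSize : ℤ) ≤ M'.verts.ncard := by exact_mod_cast hsize
    _ ≤ M'.twiceCycleRank := hred.ncard_verts_le_twiceCycleRank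
    _ ≤ M.twiceCycleRank := twiceCycleRank_le_of_reflTransGen hM'

end Multigraph

namespace TreeCutDecomp

variable {V : Type}

lemma torso_mult {N : Type} (D : TreeCutDecomp N V) (G : SimpleGraph V) (t : N)
    (e : Sym2 (V ⊕ N)) :
    (D.torso G t).mult e = Set.ncard {f : Sym2 V | f ∈ G.edgeSet ∧
      f.map (D.proj t) = e ∧ ¬(f.map (D.proj t)).IsDiag} := rfl

def single (V : Type) : TreeCutDecomp PUnit V where
  T := ⊥
  connected := SimpleGraph.Connected.mk fun _ _ => .rfl
  acyclic := SimpleGraph.isAcyclic_bot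
  root := ()
  bag _ := Set.univ
  bag_disjoint _ _ hst := absurd (Subsingleton.elim _ _) hst
  bag_cover _ := ⟨(), trivial⟩

lemma adh_single (G : SimpleGraph V) (t : PUnit) : (single V).adh G t = 0 := by
  rw [adh]
  convert Set.ncard_empty (Sym2 V)
  refine Set.eq_empty_of_forall_notMem ?_
  rintro _ ⟨-, x, y, -, -, hy⟩
  exact hy ⟨(), fun p => p.start_mem_support, trivial⟩

lemma proj_single (t : PUnit) : (single V).proj t = Sum.inl :=
  funext fun _ => if_pos trivial

variable (G : SimpleGraph V) (t : PUnit)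

lemma torso_single_verts : ((single V).torso G t).verts = Set.range Sum.inl := by
  simp [torso, single]

lemma torso_single_ncard_verts : ((single V).torso G t).verts.ncard = Nat.card V := by
  rw [torso_single_verts, Set.ncard_range_of_injective Sum.inl_injective]

lemma torso_single_mult_map_inl (e : Sym2 V) :
    ((single V).torso G t).mult (e.map Sum.inl) = if e ∈ G.edgeSet then 1 else 0 := by
  have hset : {f : Sym2 V | f ∈ G.edgeSet ∧
      f.map Sum.inl = e.map (Sum.inl : V → V ⊕ PUnit) ∧
      ¬(f.map (Sum.inl : V → V ⊕ PUnit)).IsDiag} = {f | f ∈ G.edgeSet ∧ f = e} := by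
    ext f
    simp only [Set.mem_ofPred_eq, (Sym2.map.injective Sum.inl_injective).eq_iff,
      Sym2.isDiag_map Sum.inl_injective]
    exact ⟨fun h => ⟨h.1, h.2.1⟩, fun h => ⟨h.1, h.2, G.not_isDiag_of_mem_edgeSet h.1⟩⟩
  rw [torso_mult, proj_single, hset]
  split_ifs with he
  · convert Set.ncard_singleton e
    ext f
    exact ⟨fun h => h.2, fun h => ⟨h ▸ he, h⟩⟩
  · convert Set.ncard_empty (Sym2 V)
    exact Set.eq_empty_of_forall_notMem fun f hf => he (hf.2 ▸ hf.1)

lemma torso_single_mult_inr (x : V ⊕ PUnit) (u : PUnit) :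
    ((single V).torso G t).mult s(x, Sum.inr u) = 0 := by
  rw [torso_mult, proj_single]
  convert Set.ncard_empty (Sym2 V)
  refine Set.eq_empty_of_forall_notMem fun f hf => ?_
  have hmem : Sum.inr u ∈ f.map Sum.inl := hf.2.1 ▸ Sym2.mem_mk_right _ _
  obtain ⟨a, -, ha⟩ := Sym2.mem_map.mp hmem
  exact Sum.inl_ne_inr ha

variable [Fintype V]

lemma torso_single_deg_inl (a : V) : ((single V).torso G t).deg (Sum.inl a) = G.degree a := by
  have hinl : ∀ b, ((single V).torso G t).mult s(Sum.inl a, Sum.inl b) =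
      if G.Adj a b then 1 else 0 := fun b => torso_single_mult_map_inl G t s(a, b)
  rw [Multigraph.deg, Fintype.sum_sum_type, hinl, if_neg (G.loopless.irrefl a)]
  simp [hinl, torso_single_mult_inr, G.neighborFinset_eq_filter,
    ← G.card_neighborFinset_eq_degree]

lemma torso_single_deg_inr (u : PUnit) : ((single V).torso G t).deg (Sum.inr u) = 0 := by
  simp [Multigraph.deg, Multigraph.mult_comm _ (Sum.inr u), torso_single_mult_inr]

lemma torso_single_degSum : ((single V).torso G t).degSum = 2 * G.edgeSet.ncard := by
  rw [← G.coe_edgeFinset, Set.ncard_coe_finset, ← G.sum_degrees_eq_twice_card_edges]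
  simp [Multigraph.degSum, Fintype.sum_sum_type, torso_single_deg_inl, torso_single_deg_inr]

lemma torso_single_numComponents_le :
    ((single V).torso G t).numComponents ≤ Nat.card G.ConnectedComponent := by
  let φ : G →g ((single V).torso G t).underlying :=
    ⟨Sum.inl, fun {a b} hab => ⟨Sum.inl_injective.ne hab.ne,
      by rw [← Sym2.map_mk, torso_single_mult_map_inl]; simp [hab]⟩⟩
  have himage : ((single V).torso G t).underlying.connectedComponentMk ''
      ((single V).torso G t).verts = SimpleGraph.ConnectedComponent.map φ '' Set.univ := by
    rw [torso_single_verts, ← Set.image_univ, Set.image_image,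
      ← Set.image_univ_of_surjective (f := G.connectedComponentMk) Quot.mk_surjective,
      Set.image_image]
    rfl
  rw [Multigraph.numComponents, himage, ← Set.ncard_univ]
  exact Set.ncard_image_le

lemma torso_single_twiceCycleRank_le :
    ((single V).torso G t).twiceCycleRank ≤ 2 * fes G := by
  have hfes := G.ncard_edgeSet_add_card_connectedComponent_le_add_fes
  have hcomp := torso_single_numComponents_le G t
  rw [Multigraph.twiceCycleRank, torso_single_degSum, torso_single_ncard_verts]
  omega

lemma width_single_le : (single V).width G ≤ 2 * fes G := by
  refine Finset.sup_le fun t _ => max_le ?_ ?_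
  · simp [adh_single]
  · have hsize := ((single V).torso G t).reducedSize_le_twiceCycleRank
    have hrank := torso_single_twiceCycleRank_le G t
    rw [tor]
    omega

end TreeCutDecomp

lemma tcw_le_width {N V : Type} [Fintype N] [Fintype V] (D : TreeCutDecomp N V)
    (G : SimpleGraph V) : tcw G ≤ D.width G :=
  Nat.sInf_le ⟨N, inferInstance, D, rfl⟩

theorem tcw_le_two_fes_add_one_general {V : Type} [Fintype V]
    (G : SimpleGraph V) (k : ℕ) (hk : fes G = k) :
    tcw G ≤ 2 * k + 1 :=
  calc tcw G ≤ (TreeCutDecomp.single V).width G := tcw_le_width _ G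
    _ ≤ 2 * fes G := TreeCutDecomp.width_single_le G
    _ ≤ 2 * k + 1 := by omega

/-- Every graph with feedback edge number `k` has tree-cut width at
most `2k + 1`. -/
theorem tcw_le_two_fes_add_one {V : Type} [Fintype V] [DecidableEq V]
    (G : SimpleGraph V) (k : ℕ) (hk : fes G = k) :
    tcw G ≤ 2 * k + 1 :=
  tcw_le_two_fes_add_one_general G k hk

end
end

section
/- Any stable matching is a factor-1/2 approximation of a maximum(-cardinality) stable matching: if M is a stable matching of an SRTI instance and M' is any matching of the acceptability graph G (in particular any maximum-cardinality stable matching), then |M'| ≤ 2·|M|. -/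
open scoped Classical

noncomputable section

/-- A matching of a graph `G`, given by the partner function: `partner v = v` means
that `v` is unmatched, and otherwise `v` is matched to `partner v`, which must be one
of its neighbours in the acceptability graph `G`. -/
structure Matching {V : Type} (G : SimpleGraph V) where
  partner : V → V
  involutive : ∀ v, partner (partner v) = v
  adj_of_ne : ∀ v, partner v ≠ v → G.Adj v (partner v)

/-- The set of edges of a matching. -/
def Matching.edgeSet {V : Type} {G : SimpleGraph V} (M : Matching G) : Set (Sym2 V) :=
  {e | ∃ v, M.partner v ≠ v ∧ e = s(v, M.partner v)}

/-- The pair `{v, w}` is blocking for the matching `M` (with respect to the rank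
functions `rk`, where `rk v w = ⊤` encodes that `v` prefers any acceptable partner to
`w`; in particular `rk v v = ⊤`, so that an unmatched agent prefers every neighbour to
staying alone): `v` and `w` are adjacent, and each strictly prefers the other to its
current situation. -/
def IsBlocking {V : Type} (G : SimpleGraph V) (rk : V → V → ℕ∞) (M : Matching G)
    (v w : V) : Prop :=
  G.Adj v w ∧ rk v w < rk v (M.partner v) ∧ rk w v < rk w (M.partner w)

/-- A matching is stable if no edge of `G` is blocking. -/
def Stable {V : Type} (G : SimpleGraph V) (rk : V → V → ℕ∞) (M : Matching G) : Prop :=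
  ∀ v w : V, ¬ IsBlocking G rk M v w
/-- Any stable matching is a factor-`1/2` approximation of a
maximum-cardinality (stable) matching: if `M` is a stable matching of an SRTI instance
and `M'` is any matching of the acceptability graph `G` (in particular any
maximum-cardinality stable matching), then `|M'| ≤ 2 · |M|`. -/
theorem stable_half_approximation {V : Type} [Fintype V] [DecidableEq V]
    (G : SimpleGraph V) (rk : V → V → ℕ∞)
    (hself : ∀ v, rk v v = ⊤)
    (hfin : ∀ v w, G.Adj v w → rk v w ≠ ⊤)
    (M : Matching G) (hM : Stable G rk M) (M' : Matching G) :
    M'.edgeSet.ncard ≤ 2 * M.edgeSet.ncard := by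
  classical
  rcases isEmpty_or_nonempty V with hV | hV
  · have : M'.edgeSet = ∅ := by
      ext e; simp only [Matching.edgeSet, Set.mem_setOf_eq, Set.mem_empty_iff_false,
        iff_false]
      rintro ⟨v, -, -⟩; exact hV.false v
    simp [this]
  have hfinA : M'.edgeSet.Finite := Set.toFinite _
  have hfinB : M.edgeSet.Finite := Set.toFinite _
  -- every M'-edge has an endpoint matched in M
  have hex : ∀ e ∈ M'.edgeSet, ∃ x, M.partner x ≠ x ∧ M'.partner x ≠ x ∧
      e = s(x, M'.partner x) := by
    rintro e ⟨v, hv, rfl⟩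
    set w := M'.partner v with hw
    have hadj : G.Adj v w := M'.adj_of_ne v hv
    by_cases h1 : M.partner v ≠ v
    · exact ⟨v, h1, hv, rfl⟩
    · push_neg at h1
      by_cases h2 : M.partner w ≠ w
      · refine ⟨w, h2, ?_, ?_⟩
        · rw [M'.involutive v]; exact fun h => hv h.symm
        · rw [M'.involutive v]; exact Sym2.eq_swap
      · push_neg at h2
        exfalso
        apply hM v w
        refine ⟨hadj, ?_, ?_⟩
        · rw [h1, hself]; exact lt_top_iff_ne_top.mpr (hfin v w hadj)
        · rw [h2, hself]; exact lt_top_iff_ne_top.mpr (hfin w v hadj.symm)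
  -- choice function
  let g : Sym2 V → V := fun e =>
    if h : ∃ x, M.partner x ≠ x ∧ M'.partner x ≠ x ∧ e = s(x, M'.partner x)
    then Classical.choose h else Classical.ofNonempty
  have hg : ∀ e ∈ M'.edgeSet, M.partner (g e) ≠ g e ∧ M'.partner (g e) ≠ g e ∧
      e = s(g e, M'.partner (g e)) := by
    intro e he
    have h := hex e he
    simp only [g, dif_pos h]
    exact Classical.choose_spec h
  -- the set of M-matched vertices
  let S : Set V := {v | M.partner v ≠ v}
  have hS : Set.MapsTo g M'.edgeSet S := fun e he => (hg e he).1
  have hginj : Set.InjOn g M'.edgeSet := by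
    intro e1 h1 e2 h2 heq
    rw [(hg e1 h1).2.2, (hg e2 h2).2.2, heq]
  have h1 : M'.edgeSet.ncard ≤ S.ncard :=
    Set.ncard_le_ncard_of_injOn g hS hginj (Set.toFinite _)
  -- S maps 2-to-1 onto M.edgeSet
  have h2 : S.ncard ≤ 2 * M.edgeSet.ncard := by
    have hfinS : S.Finite := Set.toFinite _
    rw [Set.ncard_eq_toFinset_card' S, Set.ncard_eq_toFinset_card' M.edgeSet]
    apply Finset.card_le_mul_card_image_of_maps_to (t := M.edgeSet.toFinset)
    · intro v hv
      simp only [Set.mem_toFinset] at hv ⊢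
      exact ⟨v, hv, rfl⟩
    · intro e he
      simp only [Set.mem_toFinset] at he
      obtain ⟨a, ha, rfl⟩ := he
      have hsub2 : {v ∈ S.toFinset | s(v, M.partner v) = s(a, M.partner a)} ⊆ {a, M.partner a} := by
        intro v hv
        simp only [Finset.mem_filter, Sym2.eq_iff] at hv
        rcases hv.2 with ⟨h1, -⟩ | ⟨h1, h2⟩
        · simp [h1]
        · simp [h1]
      exact le_trans (Finset.card_le_card hsub2) (Finset.card_insert_le _ _ |>.trans (by simp))
  exact h1.trans h2

end
end

section
/- Breaking a tie preserves stability in one direction: let G be an acceptability graph, v a fixed vertex, and rk, rk' two families of rank functions on G that agree at every vertex other than v and such that rk'_v preserves all strict preferences of rk_v, i.e., for all neighbors y, z of v, rk_v(y) < rk_v(z) implies rk'_v(y) < rk'_v(z) (this holds in particular when rk'_v is obtained from rk_v by breaking one tie, replacing it by an arbitrary strict order of its members). Then every matching of G that is stable with respect to rk' is also stable with respect to rk. -/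
open scoped Classical

noncomputable section

/-- Breaking a tie preserves stability in one direction: if `rk` and
`rk'` agree at every vertex other than `v₀`, and `rk'` at `v₀` preserves all strict
preferences of `rk` at `v₀` (as happens when `rk'` is obtained from `rk` by breaking
one tie of `v₀` into an arbitrary strict order), then every matching stable with
respect to `rk'` is also stable with respect to `rk`. -/
theorem stable_of_stable_tieBreak {V : Type} [Fintype V] [DecidableEq V]
    (G : SimpleGraph V) (rk rk' : V → V → ℕ∞) (v₀ : V)
    (hself : ∀ v, rk v v = ⊤) (hself' : ∀ v, rk' v v = ⊤)
    (hfin : ∀ v w, G.Adj v w → rk v w ≠ ⊤)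
    (hfin' : ∀ v w, G.Adj v w → rk' v w ≠ ⊤)
    (hagree : ∀ u : V, u ≠ v₀ → rk u = rk' u)
    (hpres : ∀ y z : V, G.Adj v₀ y → G.Adj v₀ z →
      rk v₀ y < rk v₀ z → rk' v₀ y < rk' v₀ z)
    (M : Matching G) (hM : Stable G rk' M) :
    Stable G rk M := by
  intro v w hblk
  obtain ⟨hadj, hv, hw⟩ := hblk
  have key : ∀ x y : V, G.Adj x y → rk x y < rk x (M.partner x) →
      rk' x y < rk' x (M.partner x) := by
    intro x y hxy hlt
    by_cases hx : x = v₀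
    · subst hx
      by_cases hp : M.partner x = x
      · rw [hp, hself']
        exact lt_of_le_of_ne le_top (hfin' _ _ hxy)
      · exact hpres y _ hxy (M.adj_of_ne _ hp) hlt
    · rwa [hagree x hx] at hlt
  exact hM v w ⟨hadj, key v w hadj hv, key w v hadj.symm hw⟩

end
end

section
/- Let (G, rk) be an SRTI instance with vertex set V(G) = {v_1, …, v_n}, and let k be an integer such that every stable matching of G leaves at least k vertices uncovered. Let G' arise from G by adding k new vertices x_1, …, x_k, each adjacent to all vertices of G (and to no other x-vertex), with ranks rk_{x_i}(v_j) = j for all i ∈ [k], j ∈ [n], and rk_{v}(x_i) = (max over w ∈ N_G(v) of rk_v(w)) + i for every v ∈ V(G) and i ∈ [k]. Then G' has a perfect stable matching if and only if G has a stable matching of size (n − k)/2. -/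
open scoped Classical

noncomputable section

/-- The graph `G'` obtained from `G` by adding `k` new vertices, each adjacent to every
vertex of `G` and to no other new vertex. -/
def augGraph {V : Type} (G : SimpleGraph V) (k : ℕ) : SimpleGraph (V ⊕ Fin k) where
  Adj a b :=
    match a, b with
    | Sum.inl v, Sum.inl w => G.Adj v w
    | Sum.inl _, Sum.inr _ => True
    | Sum.inr _, Sum.inl _ => True
    | Sum.inr _, Sum.inr _ => False
  symm := by
    constructor
    rintro (v | i) (w | j) h
    · exact G.adj_symm h
    · trivial
    · trivial
    · exact h
  loopless := by
    constructor
    rintro (v | i) h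
    · exact G.irrefl h
    · exact h

/-- The rank of the best-ranked neighbour... rather: the worst (largest) rank that `v`
assigns to its neighbours in `G`. -/
def maxRank {V : Type} (G : SimpleGraph V) (rk : V → V → ℕ∞) (v : V) : ℕ∞ :=
  ⨆ w ∈ G.neighborSet v, rk v w

/-- The rank functions of the augmented instance: the new vertex `x_i` ranks `v_j` at
position `j` (where `v_j` is the `j`-th vertex in the given enumeration `idx`), and
every old vertex `v` ranks `x_i` at position `α_v + i`, where `α_v` is the largest rank
`v` assigns to a neighbour in `G`.  (Non-adjacent pairs, and a vertex with itself,
get rank `⊤`.) -/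
def augRank {V : Type} [Fintype V] (G : SimpleGraph V) (rk : V → V → ℕ∞) (k : ℕ)
    (idx : V ≃ Fin (Fintype.card V)) : (V ⊕ Fin k) → (V ⊕ Fin k) → ℕ∞
  | Sum.inl v, Sum.inl w => rk v w
  | Sum.inl v, Sum.inr i => maxRank G rk v + ((i : ℕ) + 1 : ℕ)
  | Sum.inr _, Sum.inl v => (((idx v : ℕ) + 1 : ℕ) : ℕ∞)
  | Sum.inr _, Sum.inr _ => ⊤

/-!
In a perfect stable matching of `G'` every new vertex `x_i` is matched to an old vertex, since
the new vertices are pairwise non-adjacent. An old vertex ranks every `x_i` below all of its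
neighbours in `G`, so forgetting the new vertices leaves a stable matching of `G` with exactly
`k` uncovered vertices.

Conversely, match the `k` uncovered vertices `u_1, …, u_k` of a stable matching of `G`, listed
in increasing order of index, to `x_1, …, x_k`. A pair of old vertices cannot block, since
an old vertex prefers any neighbour to any `x_i`. If `v` and `x_j` block, then `v` is
uncovered (a covered vertex prefers its partner to every `x_j`), say `v = u_i`; it prefers
`x_j` to `x_i`, so `j < i`; but then `x_j` prefers its partner `u_j` to `u_i`.
-/

section Matching

variable {V : Type} {G : SimpleGraph V} (M : Matching G)

lemma Matching.ncard_covered_eq_two_mul [Fintype V] :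
    {v : V | M.partner v ≠ v}.ncard = 2 * M.edgeSet.ncard := by
  classical
  set covered : Finset V := Finset.univ.filter (fun v => M.partner v ≠ v)
  have hcovered : {v : V | M.partner v ≠ v} = covered := by ext; simp [covered]
  have hedges : M.edgeSet = ↑(covered.image fun v => s(v, M.partner v)) := by
    ext; simp [Matching.edgeSet, covered, eq_comm]
  have hfiber : ∀ a ∈ covered,
      (covered.filter fun v => s(v, M.partner v) = s(a, M.partner a)) = {a, M.partner a} := by
    intro a ha
    ext v
    simp only [covered, Finset.mem_filter, Finset.mem_univ, true_and] at ha ⊢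
    simp only [Sym2.eq_iff, Finset.mem_insert, Finset.mem_singleton]
    constructor
    · rintro ⟨-, ⟨rfl, -⟩ | ⟨rfl, -⟩⟩ <;> simp
    · rintro (rfl | rfl)
      · simpa using ha
      · simp [M.involutive, Ne.symm ha]
  rw [hcovered, hedges, Set.ncard_coe_finset, Set.ncard_coe_finset,
    Finset.card_eq_sum_card_image (fun v => s(v, M.partner v)) covered, Finset.sum_congr rfl (g := fun _ => 2) ?_, Finset.sum_const, smul_eq_mul, mul_comm]
  simp only [Finset.forall_mem_image]
  intro a ha
  rw [hfiber a ha, Finset.card_pair (Ne.symm (by simpa [covered] using ha))]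

lemma Matching.two_mul_ncard_edgeSet_add_ncard_uncovered [Fintype V] :
    2 * M.edgeSet.ncard + {v : V | M.partner v = v}.ncard = Fintype.card V := by
  rw [← M.ncard_covered_eq_two_mul, ← Nat.card_eq_fintype_card,
    ← Set.ncard_add_ncard_compl {v : V | M.partner v ≠ v}]
  congr
  ext
  simp

end Matching

lemma IsBlocking.symm {V : Type} {G : SimpleGraph V} {rk : V → V → ℕ∞} {M : Matching G}
    {v w : V} (h : IsBlocking G rk M v w) : IsBlocking G rk M w v :=
  ⟨h.1.symm, h.2.2, h.2.1⟩

section maxRank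

variable {V : Type} {G : SimpleGraph V} {rk : V → V → ℕ∞} {v w : V}

lemma rk_le_maxRank (h : G.Adj v w) : rk v w ≤ maxRank G rk v :=
  le_iSup₂ (f := fun w (_ : w ∈ G.neighborSet v) => rk v w) w h

lemma rk_lt_maxRank_add (h : G.Adj v w) (hfin : rk v w ≠ ⊤) (n : ℕ) :
    rk v w < maxRank G rk v + ((n + 1 : ℕ) : ℕ∞) :=
  calc rk v w < rk v w + ((n + 1 : ℕ) : ℕ∞) := by
        simpa using (ENat.add_lt_add_iff_left hfin).2 (show (0 : ℕ∞) < (n + 1 : ℕ) by simp)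
    _ ≤ maxRank G rk v + ((n + 1 : ℕ) : ℕ∞) := by gcongr; exact rk_le_maxRank h

end maxRank

section Restrict

variable {V : Type} {G : SimpleGraph V} {k : ℕ} (M' : Matching (augGraph G k))

def Matching.restrictAug : Matching G where
  partner v := Sum.elim id (fun _ => v) (M'.partner (Sum.inl v))
  involutive v := by
    rcases h : M'.partner (Sum.inl v) with w | i
    · have hw : M'.partner (Sum.inl w) = Sum.inl v := by rw [← h, M'.involutive]
      simp [hw]
    · simp [h]
  adj_of_ne v hv := by
    rcases h : M'.partner (Sum.inl v) with w | i
    · have hadj := M'.adj_of_ne (Sum.inl v) (by simp_all)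
      rw [h] at hadj
      exact hadj
    · simp [h] at hv

variable {M'} {v w : V} {i : Fin k}

lemma Matching.restrictAug_partner_of_inl (h : M'.partner (Sum.inl v) = Sum.inl w) :
    M'.restrictAug.partner v = w := by
  simp [Matching.restrictAug, h]

lemma Matching.restrictAug_partner_of_inr (h : M'.partner (Sum.inl v) = Sum.inr i) :
    M'.restrictAug.partner v = v := by
  simp [Matching.restrictAug, h]

lemma augRank_lt_partner_of_lt_restrictAug [Fintype V] {rk : V → V → ℕ∞}
    (idx : V ≃ Fin (Fintype.card V)) (hfin : ∀ v w, G.Adj v w → rk v w ≠ ⊤)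
    (hvw : G.Adj v w) (h : rk v w < rk v (M'.restrictAug.partner v)) :
    augRank G rk k idx (Sum.inl v) (Sum.inl w) <
      augRank G rk k idx (Sum.inl v) (M'.partner (Sum.inl v)) := by
  rcases hv : M'.partner (Sum.inl v) with u | j
  · rwa [Matching.restrictAug_partner_of_inl hv] at h
  · exact rk_lt_maxRank_add hvw (hfin v w hvw) j

lemma Stable.restrictAug [Fintype V] {rk : V → V → ℕ∞} {idx : V ≃ Fin (Fintype.card V)}
    (hfin : ∀ v w, G.Adj v w → rk v w ≠ ⊤) (hM' : Stable (augGraph G k) (augRank G rk k idx) M') :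
    Stable G rk M'.restrictAug := fun v w ⟨hvw, hv, hw⟩ =>
  hM' (Sum.inl v) (Sum.inl w) ⟨hvw, augRank_lt_partner_of_lt_restrictAug idx hfin hvw hv,
    augRank_lt_partner_of_lt_restrictAug idx hfin hvw.symm hw⟩

lemma Matching.ncard_uncovered_restrictAug (hperf : ∀ x, M'.partner x ≠ x) :
    {v : V | M'.restrictAug.partner v = v}.ncard = k := by
  have himage : Sum.inl '' {v : V | M'.restrictAug.partner v = v} =
      M'.partner '' Set.range Sum.inr := by
    rw [Function.Involutive.image_eq_preimage_symm M'.involutive]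
    ext x
    rcases x with v | j
    · rcases hv : M'.partner (Sum.inl v) with w | i
      · have hwv : w ≠ v := fun hwv => hperf (Sum.inl v) (hwv ▸ hv)
        simp [hv, Matching.restrictAug_partner_of_inl hv, hwv]
      · simp [hv, Matching.restrictAug_partner_of_inr hv]
    · rcases hj : M'.partner (Sum.inr j) with w | i
      · simp [hj]
      · have hadj := M'.adj_of_ne (Sum.inr j) (hperf _)
        rw [hj] at hadj
        exact absurd hadj id
  rw [← Set.ncard_image_of_injective _ Sum.inl_injective, himage,
    Set.ncard_image_of_injective _ (Function.Involutive.injective M'.involutive),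
    Set.ncard_range_of_injective Sum.inr_injective, Nat.card_eq_fintype_card, Fintype.card_fin]

end Restrict

lemma exists_equiv_fin_strictMono {V : Type} [Fintype V] (idx : V ≃ Fin (Fintype.card V))
    {P : V → Prop} {k : ℕ} (h : {v | P v}.ncard = k) :
    ∃ e : Fin k ≃ {v // P v}, StrictMono fun i => idx (e i) := by
  classical
  set s : Finset (Fin (Fintype.card V)) := Finset.univ.filter fun x => P (idx.symm x)
  have hs : s.card = k := by
    rw [← h, ← Set.ncard_image_of_injective _ idx.injective, ← Set.ncard_coe_finset]
    congr
    ext x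
    simp [s]
  refine ⟨(s.orderIsoOfFin hs).toEquiv.trans (idx.symm.subtypeEquiv fun x => by simp [s]),
    fun i j hij => ?_⟩
  simpa using (s.orderIsoOfFin hs).strictMono hij

section Augment

variable {V : Type} {G : SimpleGraph V} {k : ℕ} (M : Matching G)
  (e : Fin k ≃ {v // M.partner v = v})

def Matching.augment : Matching (augGraph G k) where
  partner := Sum.elim
    (fun v => if h : M.partner v = v then Sum.inr (e.symm ⟨v, h⟩) else Sum.inl (M.partner v))
    (fun i => Sum.inl (e i : V))
  involutive := by
    rintro (v | i)
    · by_cases h : M.partner v = v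
      · simp [h]
      · simp [h, Ne.symm h, M.involutive]
    · simp [(e i).2]
  adj_of_ne := by
    rintro (v | i) -
    · by_cases h : M.partner v = v
      · simp only [h, Sum.elim_inl, dite_true]
        trivial
      · simp only [h, Sum.elim_inl, dite_false]
        exact M.adj_of_ne v h
    · trivial

variable {M} {v : V}

lemma Matching.augment_partner_inl_of_uncovered (h : M.partner v = v) :
    (M.augment e).partner (Sum.inl v) = Sum.inr (e.symm ⟨v, h⟩) := by
  simp [Matching.augment, h]

lemma Matching.augment_partner_inl_of_covered (h : M.partner v ≠ v) :
    (M.augment e).partner (Sum.inl v) = Sum.inl (M.partner v) := by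
  simp [Matching.augment, h]

lemma Matching.augment_partner_inr (i : Fin k) :
    (M.augment e).partner (Sum.inr i) = Sum.inl (e i : V) := rfl

lemma Matching.augment_partner_ne : ∀ x, (M.augment e).partner x ≠ x := by
  rintro (v | i)
  · by_cases h : M.partner v = v
    · simp [Matching.augment_partner_inl_of_uncovered e h]
    · simpa [Matching.augment_partner_inl_of_covered e h] using h
  · simp [Matching.augment_partner_inr]

variable [Fintype V] {rk : V → V → ℕ∞} (idx : V ≃ Fin (Fintype.card V)) {e}

lemma augRank_augment_partner_le (hself : ∀ v, rk v v = ⊤) (v : V) :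
    augRank G rk k idx (Sum.inl v) ((M.augment e).partner (Sum.inl v)) ≤ rk v (M.partner v) := by
  by_cases h : M.partner v = v
  · rw [h, hself]
    exact le_top
  · rw [Matching.augment_partner_inl_of_covered e h]
    rfl

lemma not_isBlocking_augment_inl_inr (hmono : StrictMono fun i => idx (e i)) (v : V)
    (j : Fin k) :
    ¬ IsBlocking (augGraph G k) (augRank G rk k idx) (M.augment e) (Sum.inl v) (Sum.inr j) := by
  rintro ⟨-, hv, hj⟩
  rw [Matching.augment_partner_inr] at hj
  simp only [augRank, Nat.cast_lt] at hj
  have hidx : idx v < idx (e j) := Fin.lt_def.2 (by omega)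
  by_cases h : M.partner v = v
  · rw [Matching.augment_partner_inl_of_uncovered e h] at hv
    simp only [augRank] at hv
    have hji : j < e.symm ⟨v, h⟩ := Fin.lt_def.2 (by simpa using lt_of_add_lt_add_left hv)
    exact lt_asymm hidx (by simpa using hmono hji)
  · rw [Matching.augment_partner_inl_of_covered e h] at hv
    exact not_lt.2 ((rk_le_maxRank (M.adj_of_ne v h)).trans le_self_add) hv

lemma Stable.augment (hself : ∀ v, rk v v = ⊤) (hM : Stable G rk M)
    (hmono : StrictMono fun i => idx (e i)) :
    Stable (augGraph G k) (augRank G rk k idx) (M.augment e) := by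
  rintro (v | i) (w | j) hb
  · exact hM v w ⟨hb.1, hb.2.1.trans_le (augRank_augment_partner_le idx hself v),
      hb.2.2.trans_le (augRank_augment_partner_le idx hself w)⟩
  · exact not_isBlocking_augment_inl_inr idx hmono v j hb
  · exact not_isBlocking_augment_inl_inr idx hmono w i hb.symm
  · exact hb.1

end Augment

theorem perfect_aug_iff_stable_of_size_general {V : Type} [Fintype V]
    (G : SimpleGraph V) (rk : V → V → ℕ∞)
    (hself : ∀ v, rk v v = ⊤)
    (hfin : ∀ v w, G.Adj v w → rk v w ≠ ⊤)
    (k : ℕ) (idx : V ≃ Fin (Fintype.card V)) :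
    (∃ M' : Matching (augGraph G k),
        Stable (augGraph G k) (augRank G rk k idx) M' ∧ ∀ x, M'.partner x ≠ x) ↔
    (∃ M : Matching G, Stable G rk M ∧
        (2 * M.edgeSet.ncard : ℤ) = (Fintype.card V : ℤ) - (k : ℤ)) := by
  constructor
  · rintro ⟨M', hM', hperf⟩
    have hcount := M'.restrictAug.two_mul_ncard_edgeSet_add_ncard_uncovered
    rw [Matching.ncard_uncovered_restrictAug hperf] at hcount
    exact ⟨M'.restrictAug, hM'.restrictAug hfin, by omega⟩
  · rintro ⟨M, hM, hsize⟩
    have hcount := M.two_mul_ncard_edgeSet_add_ncard_uncovered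
    obtain ⟨e, hmono⟩ := exists_equiv_fin_strictMono idx
      (show {v | M.partner v = v}.ncard = k by omega)
    exact ⟨M.augment e, hM.augment idx hself hmono, Matching.augment_partner_ne e⟩

/-- Let `(G, rk)` be an SRTI instance on `n` vertices and `k` such
that every stable matching of `G` leaves at least `k` vertices uncovered.  Add `k` new
vertices adjacent to all old vertices, ranked and ranking as in `augRank`.  Then the
augmented instance has a perfect stable matching iff `G` has a stable matching of size
`(n − k)/2`. -/
theorem perfect_aug_iff_stable_of_size {V : Type} [Fintype V] [DecidableEq V]
    (G : SimpleGraph V) (rk : V → V → ℕ∞)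
    (hself : ∀ v, rk v v = ⊤)
    (hfin : ∀ v w, G.Adj v w → rk v w ≠ ⊤)
    (k : ℕ) (idx : V ≃ Fin (Fintype.card V))
    (hk : ∀ M : Matching G, Stable G rk M → k ≤ Set.ncard {v : V | M.partner v = v}) :
    (∃ M' : Matching (augGraph G k),
        Stable (augGraph G k) (augRank G rk k idx) M' ∧ ∀ x, M'.partner x ≠ x) ↔
    (∃ M : Matching G, Stable G rk M ∧
        (2 * M.edgeSet.ncard : ℤ) = (Fintype.card V : ℤ) - (k : ℤ)) :=
  perfect_aug_iff_stable_of_size_general G rk hself hfin k idx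

end
end

section
/- Triangle forcing lemma: let (G, rk) be an SRTI instance containing three vertices v, v', v'' with edges {v,v'}, {v,v''}, {v',v''} ∈ E(G), where v' and v'' have no neighbors in G other than the two indicated ones, and with ranks rk_{v'}(v'') = 1, rk_{v'}(v) = 2, rk_{v''}(v) = 1, rk_{v''}(v') = 2 (the ranks that v assigns to v' and v'' are arbitrary). Then in every stable matching M of G, the vertex v is matched, i.e., M(v) ≠ v. -/
open scoped Classical

noncomputable section

/-! If `v` were unmatched, `v'` could not be matched to `v`, so either `v'` is matched to `v''`,
and then `v''` (which ranks `v` first) and the unmatched `v` block, or `v'` is unmatched, and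
then so is `v''`, and the edge `v' v''` blocks. -/

namespace Matching

variable {V : Type} {G : SimpleGraph V} (M : Matching G) {u w a b : V}

theorem partner_symm (h : M.partner u = w) : M.partner w = u :=
  h ▸ M.involutive u

theorem partner_ne_of_partner_eq_self (hw : M.partner w = w) (hne : u ≠ w) :
    M.partner u ≠ w :=
  fun h => hne ((M.partner_symm h).symm.trans hw)

theorem partner_eq_self_of_neighbors_unmatched (hN : ∀ x, G.Adj u x → x = a ∨ x = b)
    (ha : M.partner a = a) (hb : M.partner b = b) (hua : u ≠ a) (hub : u ≠ b) :
    M.partner u = u := by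
  by_contra hu
  rcases hN _ (M.adj_of_ne u hu) with h | h
  · exact M.partner_ne_of_partner_eq_self ha hua h
  · exact M.partner_ne_of_partner_eq_self hb hub h

end Matching

section Blocking

variable {V : Type} {G : SimpleGraph V} {rk : V → V → ℕ∞} {M : Matching G} {u w : V}

theorem isBlocking_of_lt_of_partner_eq_self (hself : ∀ x, rk x x = ⊤)
    (hfin : ∀ x y, G.Adj x y → rk x y ≠ ⊤) (hadj : G.Adj u w)
    (hu : rk u w < rk u (M.partner u)) (hw : M.partner w = w) : IsBlocking G rk M u w :=
  ⟨hadj, hu, by rw [hw, hself]; exact (hfin w u hadj.symm).lt_top⟩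

theorem isBlocking_of_both_unmatched (hself : ∀ x, rk x x = ⊤)
    (hfin : ∀ x y, G.Adj x y → rk x y ≠ ⊤) (hadj : G.Adj u w)
    (hu : M.partner u = u) (hw : M.partner w = w) : IsBlocking G rk M u w :=
  isBlocking_of_lt_of_partner_eq_self hself hfin hadj
    (by rw [hu, hself]; exact (hfin u w hadj).lt_top) hw

end Blocking

theorem matched_of_triangle_general {V : Type}
    (G : SimpleGraph V) (rk : V → V → ℕ∞)
    (hself : ∀ u, rk u u = ⊤)
    (hfin : ∀ u w, G.Adj u w → rk u w ≠ ⊤)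
    (v v' v'' : V)
    (h1 : G.Adj v v') (h2 : G.Adj v v'') (h3 : G.Adj v' v'')
    (hv' : ∀ w, G.Adj v' w → w = v ∨ w = v'')
    (hv'' : ∀ w, G.Adj v'' w → w = v ∨ w = v')
    (r3 : rk v'' v = 1) (r4 : rk v'' v' = 2)
    (M : Matching G) (hM : Stable G rk M) :
    M.partner v ≠ v := by
  intro hv
  by_cases hp' : M.partner v' = v'
  · have hp'' : M.partner v'' = v'' :=
      M.partner_eq_self_of_neighbors_unmatched hv'' hv hp' h2.ne' h3.ne'
    exact hM v' v'' (isBlocking_of_both_unmatched hself hfin h3 hp' hp'')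
  · have hp'v'' : M.partner v' = v'' :=
      (hv' _ (M.adj_of_ne v' hp')).resolve_left (M.partner_ne_of_partner_eq_self hv h1.ne')
    have hprefers : rk v'' v < rk v'' (M.partner v'') := by
      rw [M.partner_symm hp'v'', r3, r4]
      norm_num
    exact hM v'' v (isBlocking_of_lt_of_partner_eq_self hself hfin h2.symm hprefers hv)

/-- Triangle forcing lemma: if `G` contains a triangle `v, v', v''`
in which `v'` and `v''` have no neighbours other than the indicated ones, with ranks
`rk_{v'}(v'') = 1`, `rk_{v'}(v) = 2`, `rk_{v''}(v) = 1`, `rk_{v''}(v') = 2`, then in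
every stable matching `M` of `G` the vertex `v` is matched. -/
theorem matched_of_triangle {V : Type} [Fintype V] [DecidableEq V]
    (G : SimpleGraph V) (rk : V → V → ℕ∞)
    (hself : ∀ u, rk u u = ⊤)
    (hfin : ∀ u w, G.Adj u w → rk u w ≠ ⊤)
    (v v' v'' : V)
    (h1 : G.Adj v v') (h2 : G.Adj v v'') (h3 : G.Adj v' v'')
    (hv' : ∀ w, G.Adj v' w → w = v ∨ w = v'')
    (hv'' : ∀ w, G.Adj v'' w → w = v ∨ w = v')
    (r1 : rk v' v'' = 1) (r2 : rk v' v = 2)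
    (r3 : rk v'' v = 1) (r4 : rk v'' v' = 2)
    (M : Matching G) (hM : Stable G rk M) :
    M.partner v ≠ v :=
  matched_of_triangle_general G rk hself hfin v v' v'' h1 h2 h3 hv' hv'' r3 r4 M hM

end
end
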